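/- Let n be a positive natural number and J the standard symplectic matrix on ℝ^{2n}. Every C^∞ map L : ℝ^{2n} → ℝ^{2n} satisfying the symplectic Killing equation Σ_m ( ∂L^m/∂x^j (x) J_{m i} + J_{j m} ∂L^m/∂x^i (x) ) = 0 (for all x, i, j) is a Hamiltonian vector field: there exists a C^∞ function Φ : ℝ^{2n} → ℝ such that Σ_m L^m(x) J_{m i} = ∂Φ/∂x^i (x) for all x and i. -/

import Mathlib

set_option maxHeartbeats 1000000

/-- The partial derivative of a function `f : ℝᴺ → ℝ` in the `j`-th coordinate
direction at the point `x`. -/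
noncomputable def pderiv' {N : ℕ} (j : Fin N) (f : (Fin N → ℝ) → ℝ) (x : Fin N → ℝ) : ℝ :=
  fderiv ℝ f x (Pi.single j 1)

/-- The standard symplectic matrix `J = [[0, Iₙ], [-Iₙ, 0]]` on `ℝ^{2n}`. -/
def Jstd (n : ℕ) : Matrix (Fin (2 * n)) (Fin (2 * n)) ℝ := fun i j =>
  if (i : ℕ) + n = (j : ℕ) then 1 else if (j : ℕ) + n = (i : ℕ) then -1 else 0

open MeasureTheory Set
open scoped ENNReal NNReal

open intervalIntegral Metric Set in
theorem poincare_lemma {E : Type*} [NormedAddCommGroup E] [NormedSpace ℝ E]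
    [FiniteDimensional ℝ E]
    (ω : E → E →L[ℝ] ℝ) (hω : ContDiff ℝ (⊤ : ℕ∞) ω)
    (hsym : ∀ x v w, fderiv ℝ ω x v w = fderiv ℝ ω x w v) :
    ∃ Φ : E → ℝ, ContDiff ℝ (⊤ : ℕ∞) Φ ∧ ∀ x, HasFDerivAt Φ (ω x) x := by
  classical
  have hωd : Differentiable ℝ ω := hω.differentiable (by simp)
  have hcfd : Continuous (fderiv ℝ ω) := (hω.fderiv_right (m := (⊤ : ℕ∞)) (by simp)).continuous
  set F' : E → ℝ → E →L[ℝ] ℝ :=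
    fun x t => t • ((fderiv ℝ ω (t • x)).flip x) + ω (t • x) with hF'def
  have hF'cont : Continuous fun p : E × ℝ => F' p.1 p.2 := by
    have h1 : Continuous fun p : E × ℝ => fderiv ℝ ω (p.2 • p.1) :=
      hcfd.comp (continuous_snd.smul continuous_fst)
    have h2 : Continuous fun p : E × ℝ => (fderiv ℝ ω (p.2 • p.1)).flip p.1 := by
      have hflip : Continuous fun p : E × ℝ => (fderiv ℝ ω (p.2 • p.1)).flip :=
        (ContinuousLinearMap.flipₗᵢ ℝ E E ℝ).continuous.comp h1
      exact isBoundedBilinearMap_apply.continuous.comp (hflip.prodMk continuous_fst)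
    exact (continuous_snd.smul h2).add (hω.continuous.comp (continuous_snd.smul continuous_fst))
  set Φ : E → ℝ := fun x => ∫ t in (0:ℝ)..1, ω (t • x) x with hΦdef
  have key : ∀ x₀ : E, HasFDerivAt Φ (ω x₀) x₀ := by
    intro x₀
    obtain ⟨C, hC⟩ : ∃ C, ∀ p ∈ (closedBall x₀ 1) ×ˢ (Icc (0:ℝ) 1),
        ‖F' p.1 p.2‖ ≤ C :=
      ((isCompact_closedBall x₀ 1).prod isCompact_Icc).exists_bound_of_continuousOn
        hF'cont.continuousOn
    have hdiff : ∀ (t : ℝ) (x : E), HasFDerivAt (fun y => ω (t • y) y) (F' x t) x := by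
      intro t x
      have h1 : HasFDerivAt (fun y : E => t • y) (t • ContinuousLinearMap.id ℝ E) x := by
        exact (t • ContinuousLinearMap.id ℝ E).hasFDerivAt (x := x)
      have h2 : HasFDerivAt (fun y => ω (t • y))
          ((fderiv ℝ ω (t • x)).comp (t • ContinuousLinearMap.id ℝ E)) x :=
        (hωd (t • x)).hasFDerivAt.comp x h1
      have h3 := h2.clm_apply (hasFDerivAt_id x)
      refine h3.congr_fderiv (Eq.symm ?_)
      ext v
      simp [hF'def, mul_comm]
      ring
    have hmain := intervalIntegral.hasFDerivAt_integral_of_dominated_of_fderiv_le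
      (𝕜 := ℝ) (μ := MeasureTheory.volume) (F := fun x t => ω (t • x) x) (F' := F')
      (x₀ := x₀) (a := 0) (b := 1) (bound := fun _ => C) (ball_mem_nhds x₀ one_pos)
      (Filter.Eventually.of_forall fun x =>
        (Continuous.aestronglyMeasurable (by
          exact ((hω.continuous.comp (continuous_id.smul continuous_const)).clm_apply
            continuous_const))))
      (Continuous.intervalIntegrable (by
        exact ((hω.continuous.comp (continuous_id.smul continuous_const)).clm_apply
          continuous_const)) _ _)
      ((hF'cont.comp (continuous_const.prodMk continuous_id)).aestronglyMeasurable)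
      (Filter.Eventually.of_forall (fun t ht x hx => by
        rw [Set.uIoc_of_le zero_le_one] at ht
        exact hC (x, t) ⟨ball_subset_closedBall hx, ⟨ht.1.le, ht.2⟩⟩))
      intervalIntegrable_const
      (Filter.Eventually.of_forall (fun t _ x _ => hdiff t x))
    have hInt : (∫ t in (0:ℝ)..1, F' x₀ t) = ω x₀ := by
      have hg : ∀ t ∈ Set.uIcc (0:ℝ) 1,
          HasDerivAt (fun s : ℝ => s • ω (s • x₀)) (F' x₀ t) t := by
        intro t _
        have h2 : HasDerivAt (fun s : ℝ => ω (s • x₀)) (fderiv ℝ ω (t • x₀) x₀) t := by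
          have hd : HasDerivAt (fun s : ℝ => s • x₀) x₀ t := by
            simpa using (hasDerivAt_id t).smul_const x₀
          exact (hωd (t • x₀)).hasFDerivAt.comp_hasDerivAt t hd
        have h3 := (hasDerivAt_id t).smul h2
        refine h3.congr_deriv (Eq.symm ?_)
        ext v
        simp [hF'def, hsym (t • x₀) v x₀, mul_comm]
      have hint : IntervalIntegrable (F' x₀) MeasureTheory.volume 0 1 :=
        Continuous.intervalIntegrable
          (hF'cont.comp (continuous_const.prodMk continuous_id)) _ _
      rw [intervalIntegral.integral_eq_sub_of_hasDerivAt hg hint]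
      simp
    rw [hΦdef]
    exact hInt ▸ hmain
  have hfd : fderiv ℝ Φ = ω := funext fun x => (key x).fderiv
  refine ⟨Φ, ?_, key⟩
  rw [contDiff_infty_iff_fderiv]
  exact ⟨fun x => (key x).differentiableAt, hfd ▸ hω⟩

/-- Every smooth vector field `L` on `ℝ^{2n}` satisfying the symplectic Killing
equation is Hamiltonian: there is a smooth function `Φ` with `Σ_m L^m J_{m i} = ∂_i Φ`. -/
theorem symplectic_killing_is_hamiltonian (n : ℕ) (hn : 0 < n)
    (L : (Fin (2 * n) → ℝ) → (Fin (2 * n) → ℝ)) (hL : ContDiff ℝ (⊤ : ℕ∞) L)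
    (hKill : ∀ (x : Fin (2 * n) → ℝ) (i j : Fin (2 * n)),
      ∑ m, (pderiv' j (fun y => L y m) x * Jstd n m i
        + Jstd n j m * pderiv' i (fun y => L y m) x) = 0) :
    ∃ Φ : (Fin (2 * n) → ℝ) → ℝ, ContDiff ℝ (⊤ : ℕ∞) Φ ∧
      ∀ (x : Fin (2 * n) → ℝ) (i : Fin (2 * n)),
        ∑ m, L x m * Jstd n m i = pderiv' i Φ x := by
  classical
  set e : Fin (2*n) → (Fin (2*n) → ℝ) := fun i => Pi.single i 1 with hedef
  set c : Fin (2*n) → (Fin (2*n) → ℝ) → ℝ := fun i x => ∑ m, L x m * Jstd n m i with hcdef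
  have hLm : ∀ m, ContDiff ℝ (⊤ : ℕ∞) (fun y : Fin (2*n) → ℝ => L y m) := by
    intro m
    exact (ContinuousLinearMap.proj (R := ℝ) (φ := fun _ : Fin (2*n) => ℝ) m).contDiff.comp hL
  have hc : ∀ i, ContDiff ℝ (⊤ : ℕ∞) (c i) := fun i =>
    ContDiff.sum fun m _ => (hLm m).mul contDiff_const
  set ω : (Fin (2*n) → ℝ) → (Fin (2*n) → ℝ) →L[ℝ] ℝ :=
    fun x => ∑ i, (c i x) • ContinuousLinearMap.proj (R := ℝ) (φ := fun _ : Fin (2*n) => ℝ) i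
    with hωdef
  have hω : ContDiff ℝ (⊤ : ℕ∞) ω := ContDiff.sum fun i _ => (hc i).smul contDiff_const
  have heval : ∀ x i, ω x (e i) = c i x := by
    intro x i
    rw [hωdef]
    simp only [ContinuousLinearMap.sum_apply, ContinuousLinearMap.smul_apply,
      ContinuousLinearMap.proj_apply, hedef, Pi.single_apply, smul_eq_mul]
    simp [Finset.sum_ite_eq']
  have hceval : ∀ i, (fun y => ω y (e i)) = c i := fun i => funext fun y => heval y i
  have hflip : ∀ x i, fderiv ℝ (fun y => ω y (e i)) x = (fderiv ℝ ω x).flip (e i) := by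
    intro x i
    have h := ((hω.differentiable (by simp) x).hasFDerivAt).clm_apply (hasFDerivAt_const (e i) x)
    rw [h.fderiv]
    ext v
    simp
  have hkey : ∀ x i j, fderiv ℝ ω x (e j) (e i) = pderiv' j (c i) x := by
    intro x i j
    have h1 : pderiv' j (c i) x = fderiv ℝ (c i) x (e j) := rfl
    rw [h1, ← hceval i, hflip x i, ContinuousLinearMap.flip_apply]
  have hcd : ∀ x i j, pderiv' j (c i) x
      = ∑ m, pderiv' j (fun y => L y m) x * Jstd n m i := by
    intro x i j
    show fderiv ℝ (c i) x (Pi.single j 1) = _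
    rw [hcdef]
    simp only []
    rw [fderiv_fun_sum (fun m _ => ((hLm m).differentiable (by simp) x).mul_const (Jstd n m i))]
    rw [ContinuousLinearMap.sum_apply]
    refine Finset.sum_congr rfl fun m _ => ?_
    rw [fderiv_mul_const ((hLm m).differentiable (by simp) x)]
    rw [ContinuousLinearMap.smul_apply, smul_eq_mul]
    rw [mul_comm]
    rfl
  have hJanti : ∀ i j, Jstd n j i = - Jstd n i j := by
    intro i j
    unfold Jstd
    split_ifs <;> try norm_num
    all_goals omega
  have hsymb : ∀ x i j, pderiv' j (c i) x = pderiv' i (c j) x := by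
    intro x i j
    have h := hKill x i j
    rw [hcd x i j, hcd x j i]
    have h2 : ∑ m, (pderiv' j (fun y => L y m) x * Jstd n m i
        - pderiv' i (fun y => L y m) x * Jstd n m j) = 0 := by
      rw [← h]
      refine Finset.sum_congr rfl fun m _ => ?_
      rw [hJanti m j]
      ring
    rw [Finset.sum_sub_distrib, sub_eq_zero] at h2
    exact h2
  have hvdecomp : ∀ v : Fin (2*n) → ℝ, v = ∑ j, v j • e j := by
    intro v
    rw [hedef]
    simp only []
    conv_lhs => rw [← Finset.univ_sum_single v]
    refine Finset.sum_congr rfl fun j _ => ?_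
    rw [← Pi.single_smul, smul_eq_mul, mul_one]
  have hbil : ∀ (x : Fin (2*n) → ℝ) (v w : Fin (2*n) → ℝ),
      fderiv ℝ ω x v w = ∑ j, ∑ i, v j * w i * (fderiv ℝ ω x (e j) (e i)) := by
    intro x v w
    conv_lhs => rw [hvdecomp v, hvdecomp w]
    simp only [map_sum, _root_.map_smul, ContinuousLinearMap.coe_sum', Finset.sum_apply,
      ContinuousLinearMap.sum_apply, ContinuousLinearMap.smul_apply,
      ContinuousLinearMap.coe_smul', Pi.smul_apply, smul_eq_mul, Finset.mul_sum,
      Finset.sum_mul]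
    rw [Finset.sum_comm]
    refine Finset.sum_congr rfl fun j _ => Finset.sum_congr rfl fun i _ => by ring
  have hsym : ∀ x v w, fderiv ℝ ω x v w = fderiv ℝ ω x w v := by
    intro x v w
    rw [hbil x v w, hbil x w v]
    conv_rhs => rw [Finset.sum_comm]
    refine Finset.sum_congr rfl fun j _ => Finset.sum_congr rfl fun i _ => ?_
    rw [hkey x i j, hkey x j i, hsymb x i j]
    ring
  obtain ⟨Φ, hΦ, hkeyΦ⟩ := poincare_lemma ω hω hsym
  refine ⟨Φ, hΦ, ?_⟩
  intro x i
  have h1 : pderiv' i Φ x = fderiv ℝ Φ x (e i) := rfl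
  rw [h1, (hkeyΦ x).fderiv, heval x i, hcdef]
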